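/- Let A₁, …, A_{k₀} ∈ GL_n(ℝ) and x₀ ∈ ℤⁿ with Card((Â_{k₀} ∘ ⋯ ∘ Â₁)^{-1}(x₀)) ≥ 1/ε for some ε > 0. Then there exist translation vectors w₁, …, w_{k₀} ∈ [−1/2, 1/2]ⁿ such that Card((π(A_{k₀}+w_{k₀}) ∘ ⋯ ∘ π(A₁+w₁))^{-1}(0)) ≥ 1/ε, where π(A+w) denotes the discretization x ↦ π(Ax + w) of the affine map A + w. -/

import Mathlib

/-- The rounding projection `P : ℝ → ℤ`, with `P t - 1/2 < t ≤ P t + 1/2`. -/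
noncomputable def roundHalf (t : ℝ) : ℤ := ⌈t - 1/2⌉

/-- The discretization `π(A+w)` of the affine map `x ↦ Ax + w`, as a map `ℤⁿ → ℤⁿ`. -/
noncomputable def affDisc {n : ℕ} (A : Matrix (Fin n) (Fin n) ℝ) (w : Fin n → ℝ)
    (x : Fin n → ℤ) : Fin n → ℤ :=
  fun i => roundHalf (A.mulVec (fun j => (x j : ℝ)) i + w i)

/-- The composition `π(A_k+w_k) ∘ ⋯ ∘ π(A₁+w₁)`. -/
noncomputable def affComp {n : ℕ} :
    (k : ℕ) → (Fin k → Matrix (Fin n) (Fin n) ℝ) → (Fin k → Fin n → ℝ) →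
      (Fin n → ℤ) → (Fin n → ℤ)
  | 0, _, _ => id
  | k + 1, A, w => affDisc (A (Fin.last k)) (w (Fin.last k)) ∘
      affComp k (fun i => A i.castSucc) (fun i => w i.castSucc)

/-!
Pick a point `v₀` of the preimage of `x₀` and follow its orbit `vₖ₊₁ = Âₖ₊₁ vₖ`. Translating
the `k`-th map by its rounding error `wₖ = Aₖ vₖ₋₁ - vₖ ∈ [-1/2, 1/2]ⁿ` conjugates it to the
untranslated one by the integer shifts `vₖ₋₁` and `vₖ`, because rounding commutes with integer
translations. Hence the translated composition is `x ↦ Â(x + v₀) - x₀`, whose fibre over `0` is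
a translate of the fibre of `Â` over `x₀`.
-/

lemma roundHalf_sub_intCast (t : ℝ) (m : ℤ) : roundHalf (t - m) = roundHalf t - m := by
  rw [roundHalf, roundHalf, sub_right_comm, Int.ceil_sub_intCast]

lemma sub_roundHalf_mem_Icc (t : ℝ) : t - roundHalf t ∈ Set.Icc (-(1/2 : ℝ)) (1/2) := by
  have hle := Int.le_ceil (t - 1/2)
  have hlt := Int.ceil_lt_add_one (t - 1/2)
  rw [roundHalf]
  constructor <;> linarith

section Offsets

variable {n : ℕ}

noncomputable def roundingOffset (A : Matrix (Fin n) (Fin n) ℝ) (y : Fin n → ℤ) : Fin n → ℝ :=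
  fun i => A.mulVec (fun j => (y j : ℝ)) i - affDisc A (fun _ => 0) y i

lemma roundingOffset_mem_Icc (A : Matrix (Fin n) (Fin n) ℝ) (y : Fin n → ℤ) (i : Fin n) :
    roundingOffset A y i ∈ Set.Icc (-(1/2 : ℝ)) (1/2) := by
  simpa [roundingOffset, affDisc] using sub_roundHalf_mem_Icc (A.mulVec (fun j => (y j : ℝ)) i)

lemma affDisc_roundingOffset_sub (A : Matrix (Fin n) (Fin n) ℝ) (y z : Fin n → ℤ) :
    affDisc A (roundingOffset A y) (z - y) =
      affDisc A (fun _ => 0) z - affDisc A (fun _ => 0) y := by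
  funext i
  have hcast : (fun j => ((z j - y j : ℤ) : ℝ)) = (fun j => (z j : ℝ)) - fun j => (y j : ℝ) := by
    funext j; push_cast; rfl
  simp only [affDisc, roundingOffset, Pi.sub_apply, hcast, Matrix.mulVec_sub, add_zero]
  rw [sub_add_sub_cancel, roundHalf_sub_intCast]

theorem exists_offsets_affComp_sub (k : ℕ) (A : Fin k → Matrix (Fin n) (Fin n) ℝ)
    (v : Fin n → ℤ) :
    ∃ w : Fin k → Fin n → ℝ, (∀ i j, w i j ∈ Set.Icc (-(1/2 : ℝ)) (1/2)) ∧
      ∀ x, affComp k A w (x - v) =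
        affComp k A (fun _ _ => 0) x - affComp k A (fun _ _ => 0) v := by
  induction k with
  | zero => exact ⟨fun i => i.elim0, fun i => i.elim0, fun _ => rfl⟩
  | succ k ih =>
    obtain ⟨w, hw, hcomp⟩ := ih (fun i => A i.castSucc)
    set y := affComp k (fun i => A i.castSucc) (fun _ _ => 0) v
    refine ⟨Fin.snoc w (roundingOffset (A (Fin.last k)) y), ?_, fun x => ?_⟩
    · intro i
      induction i using Fin.lastCases with
      | last => simpa using roundingOffset_mem_Icc (A (Fin.last k)) y
      | cast i => simpa using hw i
    · simp only [affComp, Function.comp_apply, Fin.snoc_castSucc, Fin.snoc_last, hcomp x]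
      exact affDisc_roundingOffset_sub _ y _

end Offsets

theorem stmt13_general (n k₀ : ℕ) (A : Fin k₀ → Matrix (Fin n) (Fin n) ℝ)
    (x₀ : Fin n → ℤ) (ε : ℝ)
    (hcard : 1 / ε ≤ ((affComp k₀ A (fun _ _ => 0) ⁻¹' {x₀}).ncard : ℝ)) :
    ∃ w : Fin k₀ → Fin n → ℝ,
      (∀ i j, -(1/2 : ℝ) ≤ w i j ∧ w i j ≤ 1/2) ∧
      1 / ε ≤ ((affComp k₀ A w ⁻¹' {(0 : Fin n → ℤ)}).ncard : ℝ) := by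
  set S := affComp k₀ A (fun _ _ => 0) ⁻¹' {x₀}
  rcases S.eq_empty_or_nonempty with hS | ⟨v, hv⟩
  · refine ⟨fun _ _ => 0, fun _ _ => by norm_num, hcard.trans ?_⟩
    rw [hS, Set.ncard_empty, Nat.cast_zero]
    positivity
  · obtain ⟨w, hw, hcomp⟩ := exists_offsets_affComp_sub k₀ A v
    refine ⟨w, hw, hcard.trans_eq ?_⟩
    have hfibre : affComp k₀ A w ⁻¹' {0} = (· + v) ⁻¹' S := by
      ext x
      have hx := hcomp (x + v)
      rw [add_sub_cancel_right] at hx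
      simp only [S, Set.mem_preimage, Set.mem_singleton_iff] at hv ⊢
      rw [hx, hv, sub_eq_zero]
    rw [hfibre, Set.ncard_preimage_of_injective_subset_range (add_left_injective v)
      fun x _ => ⟨x - v, sub_add_cancel x v⟩]

/-- if `Card((Â_{k₀}∘⋯∘Â₁)⁻¹(x₀)) ≥ 1/ε` (the `Â_i` being the
discretizations, i.e. the case `w = 0`), then there exist translation vectors
`w₁,…,w_{k₀} ∈ [−1/2,1/2]ⁿ` with `Card((π(A_{k₀}+w_{k₀})∘⋯∘π(A₁+w₁))⁻¹(0)) ≥ 1/ε`. -/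
theorem stmt13 (n k₀ : ℕ) (A : Fin k₀ → Matrix (Fin n) (Fin n) ℝ)
    (hA : ∀ i, IsUnit (A i).det) (x₀ : Fin n → ℤ) (ε : ℝ) (hε : 0 < ε)
    (hcard : 1 / ε ≤ ((affComp k₀ A (fun _ _ => 0) ⁻¹' {x₀}).ncard : ℝ)) :
    ∃ w : Fin k₀ → Fin n → ℝ,
      (∀ i j, -(1/2 : ℝ) ≤ w i j ∧ w i j ≤ 1/2) ∧
      1 / ε ≤ ((affComp k₀ A w ⁻¹' {(0 : Fin n → ℤ)}).ncard : ℝ) :=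
  stmt13_general n k₀ A x₀ ε hcard
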